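/- arXiv:2401.02581 — 3 statements merged into one kernel-verified Lean document; each statement's English description precedes it below -/
import Mathlib

section
/- Let X̄ > 0 and Ȳ > 0 be reals, let S ⊆ ℝ, let f, g : ℝ → ℝ be strictly monotone increasing on [0, ∞), and let h : ℝ → ℝ be arbitrary. Define the feasible set K = {(x, y) ∈ ℝ × ℝ : 0 ≤ x ≤ X̄, 0 ≤ y ≤ Ȳ, and x − y ∈ S}. If (x*, y*) ∈ K satisfies f(x*) + g(y*) + h(x* − y*) ≤ f(x) + g(y) + h(x − y) for all (x, y) ∈ K, then x* · y* = 0. -/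
/-! Lowering both flows by `d = min x* y*` keeps them in the box and leaves the net flow
`x* - y*`, hence the constraint `x - y ∈ S` and the term `h (x - y)`, unchanged, while each
strictly increasing cost `f`, `g` strictly drops. So at an optimum one of the flows is `0`. -/

lemma add_add_apply_sub_lt_of_lower_both {f g : ℝ → ℝ} (hf : StrictMonoOn f (Set.Ici 0))
    (hg : StrictMonoOn g (Set.Ici 0)) (h : ℝ → ℝ) {x y d : ℝ} (hd : 0 < d) (hdx : d ≤ x)
    (hdy : d ≤ y) :
    f (x - d) + g (y - d) + h (x - d - (y - d)) < f x + g y + h (x - y) := by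
  have hfx : f (x - d) < f x :=
    hf (sub_nonneg.2 hdx) (hd.le.trans hdx : (0 : ℝ) ≤ x) (sub_lt_self x hd)
  have hgy : g (y - d) < g y :=
    hg (sub_nonneg.2 hdy) (hd.le.trans hdy : (0 : ℝ) ≤ y) (sub_lt_self y hd)
  rw [sub_sub_sub_cancel_right]
  linarith

theorem stmt_1_general (Xbar Ybar : ℝ) (S : Set ℝ)
    (f g h : ℝ → ℝ)
    (hf : ∀ x y : ℝ, 0 ≤ x → x < y → f x < f y)
    (hg : ∀ x y : ℝ, 0 ≤ x → x < y → g x < g y)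
    (K : Set (ℝ × ℝ))
    (hK : K = {p : ℝ × ℝ | 0 ≤ p.1 ∧ p.1 ≤ Xbar ∧ 0 ≤ p.2 ∧ p.2 ≤ Ybar ∧ p.1 - p.2 ∈ S})
    (xs ys : ℝ) (hmem : (xs, ys) ∈ K)
    (hopt : ∀ p ∈ K, f xs + g ys + h (xs - ys) ≤ f p.1 + g p.2 + h (p.1 - p.2)) :
    xs * ys = 0 := by
  subst hK
  obtain ⟨hx0, hxX, hy0, hyY, hS⟩ := hmem
  by_contra hne
  obtain ⟨hx, hy⟩ := mul_ne_zero_iff.1 hne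
  set d := min xs ys
  have hd : 0 < d := lt_min (hx0.lt_of_ne' hx) (hy0.lt_of_ne' hy)
  have hdx : d ≤ xs := min_le_left _ _
  have hdy : d ≤ ys := min_le_right _ _
  have hle := hopt (xs - d, ys - d)
    ⟨sub_nonneg.2 hdx, by linarith, sub_nonneg.2 hdy, by linarith,
      by rwa [sub_sub_sub_cancel_right]⟩
  exact (add_add_apply_sub_lt_of_lower_both (fun a ha _ _ hab => hf a _ ha hab)
    (fun a ha _ _ hab => hg a _ ha hab) h hd hdx hdy).not_ge hle

/-- Lemma 1 of the paper: at an optimum of `f x + g y + h (x - y)` over the box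
constraints with a net-flow constraint `x - y ∈ S`, where `f, g` are strictly
increasing on `[0, ∞)`, the two flows cannot both be positive: `x* ⬝ y* = 0`. -/
theorem stmt_1 (Xbar Ybar : ℝ) (hX : 0 < Xbar) (hY : 0 < Ybar) (S : Set ℝ)
    (f g h : ℝ → ℝ)
    (hf : ∀ x y : ℝ, 0 ≤ x → x < y → f x < f y)
    (hg : ∀ x y : ℝ, 0 ≤ x → x < y → g x < g y)
    (K : Set (ℝ × ℝ))
    (hK : K = {p : ℝ × ℝ | 0 ≤ p.1 ∧ p.1 ≤ Xbar ∧ 0 ≤ p.2 ∧ p.2 ≤ Ybar ∧ p.1 - p.2 ∈ S})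
    (xs ys : ℝ) (hmem : (xs, ys) ∈ K)
    (hopt : ∀ p ∈ K, f xs + g ys + h (xs - ys) ≤ f p.1 + g p.2 + h (p.1 - p.2)) :
    xs * ys = 0 :=
  stmt_1_general Xbar Ybar S f g h hf hg K hK xs ys hmem hopt
end

section
/- Let f : EuclideanSpace ℝ (Fin n) → ℝ be continuously differentiable and σ-strongly convex with σ > 0, let A be an m × n real matrix and a ∈ EuclideanSpace ℝ (Fin m). Then: (i) for every μ ∈ EuclideanSpace ℝ (Fin m) the Lagrangian x ↦ L(x, μ) = f(x) + ⟨μ, A.mulVec x − a⟩ has a unique global minimizer x*(μ); (ii) the dual function Ψ(μ) = inf over x of L(x, μ) is differentiable everywhere, with gradient ∇Ψ(μ) = A.mulVec (x*(μ)) − a. -/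
/-!
Adding the term `⟪μ, A x - a⟫`, affine in `x`, keeps the Lagrangian `σ`-strongly convex. A
strongly convex function on a finite-dimensional space is continuous and coercive, so it has a
minimizer `x*(μ)`, away from which it grows at least like `σ / 2 * ‖x - x*(μ)‖ ^ 2`; this gives
uniqueness, and comparing the growth at two multipliers shows that `μ ↦ x*(μ)` is
`‖A‖ / σ`-Lipschitz. Since the Lagrangian is affine in `μ`, `Ψ ν - Ψ μ` lies between
`⟪ν - μ, A x*(ν) - a⟫` and `⟪ν - μ, A x*(μ) - a⟫`, and continuity of `x*` turns this squeeze
into differentiability with gradient `A x*(μ) - a`.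
-/

def toEuc (m : ℕ) (v : Fin m → ℝ) : EuclideanSpace ℝ (Fin m) := WithLp.toLp 2 v

open Set Filter Topology RealInnerProductSpace

section StrongConvex

variable {E : Type*} [NormedAddCommGroup E] [InnerProductSpace ℝ E] {σ : ℝ} {g : E → ℝ}

lemma StrongConvexOn.continuous [FiniteDimensional ℝ E] (hg : StrongConvexOn univ σ g) :
    Continuous g := by
  have h := (strongConvexOn_iff_convex.1 hg).continuousOn isOpen_univ
  rw [continuousOn_univ] at h
  exact (h.add (by fun_prop : Continuous fun x : E ↦ σ / 2 * ‖x‖ ^ 2)).congr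
    fun x ↦ sub_add_cancel _ _

lemma StrongConvexOn.add_sq_norm_sub_le (hg : StrongConvexOn univ σ g) {x₀ : E}
    (hx₀ : ∀ x, g x₀ ≤ g x) (x : E) : g x₀ + σ / 2 * ‖x - x₀‖ ^ 2 ≤ g x := by
  have hseg : ∀ t ∈ Ioo (0 : ℝ) 1, g x₀ + (1 - t) * (σ / 2 * ‖x - x₀‖ ^ 2) ≤ g x := by
    rintro t ⟨ht₀, ht₁⟩
    have h := hg.2 (mem_univ x₀) (mem_univ x) (sub_nonneg.2 ht₁.le) ht₀.le (sub_add_cancel 1 t)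
    have hmin := hx₀ ((1 - t) • x₀ + t • x)
    rw [norm_sub_rev, smul_eq_mul, smul_eq_mul] at h
    nlinarith
  have hlim : Tendsto (fun t : ℝ ↦ g x₀ + (1 - t) * (σ / 2 * ‖x - x₀‖ ^ 2)) (𝓝[>] 0)
      (𝓝 (g x₀ + σ / 2 * ‖x - x₀‖ ^ 2)) :=
    (Continuous.tendsto' (by fun_prop) 0 _ (by simp)).mono_left nhdsWithin_le_nhds
  exact le_of_tendsto hlim (eventually_of_mem (Ioo_mem_nhdsGT one_pos) hseg)

lemma StrongConvexOn.eq_of_forall_le (hσ : 0 < σ) (hg : StrongConvexOn univ σ g) {x y : E}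
    (hx : ∀ z, g x ≤ g z) (hy : ∀ z, g y ≤ g z) : x = y := by
  have h := hg.add_sq_norm_sub_le hy x
  have : ‖x - y‖ ^ 2 ≤ 0 := by nlinarith [hx y]
  simpa [sub_eq_zero] using this

lemma StrongConvexOn.exists_forall_le [FiniteDimensional ℝ E] (hσ : 0 < σ)
    (hg : StrongConvexOn univ σ g) : ∃ x₀, ∀ x, g x₀ ≤ g x := by
  obtain ⟨u₀, -, hu₀⟩ := (isCompact_closedBall (0 : E) 1).exists_isMinOn
    (Metric.nonempty_closedBall.2 zero_le_one) hg.continuous.continuousOn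
  refine hg.continuous.exists_forall_le_of_isBounded 0 <|
    (Metric.isBounded_closedBall (x := 0) (r := 1 + 2 * (g 0 - g u₀) / σ)).subset ?_
  -- On `{g ≤ g 0}`, strong convexity along the chord from `0` to `x`, which leaves the unit
  -- ball at `‖x‖⁻¹ • x`, forces `σ / 2 * (‖x‖ - 1) ≤ g 0 - g u₀`.
  intro x (hx : g x ≤ g 0)
  rw [mem_closedBall_zero_iff]
  by_contra! hfar
  have hr : 1 < ‖x‖ := by
    have : g u₀ ≤ g 0 := hu₀ (Metric.mem_closedBall_self zero_le_one)
    have : 0 ≤ 2 * (g 0 - g u₀) / σ := by positivity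
    linarith
  set t := ‖x‖⁻¹
  have ht : t * ‖x‖ = 1 := inv_mul_cancel₀ (by positivity)
  have hu : t • x ∈ Metric.closedBall (0 : E) 1 := by
    rw [mem_closedBall_zero_iff, norm_smul, norm_inv, norm_norm]
    exact ht.le
  have h := hg.2 (mem_univ 0) (mem_univ x) (sub_nonneg.2 (inv_le_one_of_one_le₀ hr.le))
    (by positivity) (sub_add_cancel 1 t)
  rw [smul_zero, zero_add, zero_sub, norm_neg, smul_eq_mul, smul_eq_mul] at h
  change g (t • x) ≤ (1 - t) * g 0 + t * g x - (1 - t) * t * (σ / 2 * ‖x‖ ^ 2) at h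
  have e : (1 - t) * t * (σ / 2 * ‖x‖ ^ 2) = σ / 2 * (‖x‖ - 1) := by
    linear_combination σ / 2 * (‖x‖ - t * ‖x‖ - 1) * ht
  have hdrop : σ / 2 * (‖x‖ - 1) ≤ g 0 - g u₀ := by
    have := mul_le_mul_of_nonneg_left hx (by positivity : 0 ≤ t)
    have hmin : g u₀ ≤ g (t • x) := hu₀ hu
    linarith
  exact hfar.not_ge (by rw [add_comm, ← sub_le_iff_le_add, le_div_iff₀ hσ]; linarith)

end StrongConvex

lemma hasGradientAt_of_inner_le_sub_le_inner {F : Type*} [NormedAddCommGroup F]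
    [InnerProductSpace ℝ F] [CompleteSpace F] {Ψ : F → ℝ} {h : F → F} {μ : F}
    (hh : ContinuousAt h μ) (hlow : ∀ ν, ⟪ν - μ, h ν⟫ ≤ Ψ ν - Ψ μ)
    (hup : ∀ ν, Ψ ν - Ψ μ ≤ ⟪ν - μ, h μ⟫) : HasGradientAt Ψ (h μ) μ := by
  rw [hasGradientAt_iff_isLittleO]
  refine Asymptotics.isLittleO_iff.2 fun c hc ↦ ?_
  filter_upwards [Metric.continuousAt_iff'.1 hh c hc] with ν hν
  rw [dist_eq_norm] at hν
  have hinner := abs_real_inner_le_norm (ν - μ) (h ν - h μ)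
  rw [inner_sub_right, abs_le] at hinner
  calc ‖Ψ ν - Ψ μ - ⟪h μ, ν - μ⟫‖ ≤ ‖ν - μ‖ * ‖h ν - h μ‖ := by
        rw [Real.norm_eq_abs, abs_le, real_inner_comm]
        constructor <;> nlinarith [hlow ν, hup ν, norm_nonneg (ν - μ), norm_nonneg (h ν - h μ)]
    _ ≤ c * ‖ν - μ‖ := by
        rw [mul_comm]
        exact mul_le_mul_of_nonneg_right hν.le (norm_nonneg _)

section Lagrangian

variable {E F : Type*} [NormedAddCommGroup E] [InnerProductSpace ℝ E] [NormedAddCommGroup F]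
  [InnerProductSpace ℝ F]

def lagrangian (f : E → ℝ) (T : E →L[ℝ] F) (a : F) (x : E) (ν : F) : ℝ :=
  f x + ⟪ν, T x - a⟫

variable {f : E → ℝ} {T : E →L[ℝ] F} {a : F} {σ : ℝ}

lemma lagrangian_eq_add_inner (x : E) (μ ν : F) :
    lagrangian f T a x ν = lagrangian f T a x μ + ⟪ν - μ, T x - a⟫ := by
  simp only [lagrangian, inner_sub_left]
  ring

lemma StrongConvexOn.lagrangian (hf : StrongConvexOn univ σ f) (T : E →L[ℝ] F) (a ν : F) :
    StrongConvexOn univ σ (lagrangian f T a · ν) := by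
  have haff : ConvexOn ℝ univ fun x ↦ ⟪ν, T x - a⟫ :=
    (((innerSL ℝ ν ∘L T).toLinearMap.convexOn convex_univ).add_const (-⟪ν, a⟫)).congr
      fun x _ ↦ by simp [inner_sub_right, ← sub_eq_add_neg]
  have h := hf.add (uniformConvexOn_zero.2 haff)
  rwa [add_zero] at h

lemma norm_sub_le_of_forall_lagrangian_le (hσ : 0 < σ) (hf : StrongConvexOn univ σ f)
    {μ ν : F} {xμ xν : E} (hμ : ∀ x, lagrangian f T a xμ μ ≤ lagrangian f T a x μ)
    (hν : ∀ x, lagrangian f T a xν ν ≤ lagrangian f T a x ν) :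
    ‖xν - xμ‖ ≤ ‖T‖ / σ * ‖ν - μ‖ := by
  have hgrowμ := (hf.lagrangian T a μ).add_sq_norm_sub_le hμ xν
  have hgrowν := (hf.lagrangian T a ν).add_sq_norm_sub_le hν xμ
  rw [lagrangian_eq_add_inner xν μ, lagrangian_eq_add_inner xμ μ, norm_sub_rev] at hgrowν
  have hT : ⟪ν - μ, T (xμ - xν)⟫ ≤ ‖ν - μ‖ * (‖T‖ * ‖xν - xμ‖) := by
    rw [norm_sub_rev xν]
    exact (real_inner_le_norm _ _).trans
      (mul_le_mul_of_nonneg_left (T.le_opNorm _) (norm_nonneg _))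
  have hmono : σ * ‖xν - xμ‖ ^ 2 ≤ ‖ν - μ‖ * (‖T‖ * ‖xν - xμ‖) := by
    rw [map_sub, inner_sub_right] at hT
    rw [inner_sub_right, inner_sub_right] at hgrowν
    linarith
  rw [div_mul_eq_mul_div, le_div_iff₀ hσ]
  rcases (norm_nonneg (xν - xμ)).eq_or_lt with h0 | h0
  · rw [← h0, zero_mul]
    positivity
  · nlinarith

theorem hasGradientAt_lagrangian_of_forall_le [CompleteSpace F] (hσ : 0 < σ)
    (hf : StrongConvexOn univ σ f) {xstar : F → E}
    (hmin : ∀ ν x, lagrangian f T a (xstar ν) ν ≤ lagrangian f T a x ν) (μ : F) :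
    HasGradientAt (fun ν ↦ lagrangian f T a (xstar ν) ν) (T (xstar μ) - a) μ := by
  have hcont : ContinuousAt xstar μ :=
    continuousAt_of_locally_lipschitz one_pos (‖T‖ / σ) fun ν _ ↦ by
      simpa only [dist_eq_norm] using norm_sub_le_of_forall_lagrangian_le hσ hf (hmin μ) (hmin ν)
  refine hasGradientAt_of_inner_le_sub_le_inner (h := fun ν ↦ T (xstar ν) - a)
    ((T.continuous.continuousAt.comp hcont).sub continuousAt_const) (fun ν ↦ ?_) (fun ν ↦ ?_)
  · rw [lagrangian_eq_add_inner (xstar ν) μ ν]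
    linarith [hmin μ (xstar ν)]
  · have h := hmin ν (xstar μ)
    rw [lagrangian_eq_add_inner (xstar μ) μ ν] at h
    linarith

end Lagrangian

theorem stmt_5_general (n m : ℕ) (σ : ℝ) (hσ : 0 < σ)
    (f : EuclideanSpace ℝ (Fin n) → ℝ)
    (hsc : ConvexOn ℝ Set.univ (fun x => f x - σ / 2 * ‖x‖ ^ 2))
    (A : Matrix (Fin m) (Fin n) ℝ) (a : EuclideanSpace ℝ (Fin m))
    (Lag : EuclideanSpace ℝ (Fin n) → EuclideanSpace ℝ (Fin m) → ℝ)
    (hLag : ∀ x μ, Lag x μ = f x + @inner ℝ _ _ μ (toEuc m (A.mulVec x) - a))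
    (Ψ : EuclideanSpace ℝ (Fin m) → ℝ)
    (hΨ : ∀ μ, Ψ μ = ⨅ x : EuclideanSpace ℝ (Fin n), Lag x μ) :
    ∃ xstar : EuclideanSpace ℝ (Fin m) → EuclideanSpace ℝ (Fin n),
      (∀ μ, (∀ x, Lag (xstar μ) μ ≤ Lag x μ) ∧
            (∀ x', (∀ x, Lag x' μ ≤ Lag x μ) → x' = xstar μ)) ∧
      (∀ μ, HasGradientAt Ψ (toEuc m (A.mulVec (xstar μ)) - a) μ) := by
  set T := (Matrix.toEuclideanLin A).toContinuousLinearMap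
  obtain rfl : Lag = lagrangian f T a := funext₂ hLag
  have hf : StrongConvexOn univ σ f := strongConvexOn_iff_convex.2 hsc
  choose xstar hxstar using fun μ ↦ (hf.lagrangian T a μ).exists_forall_le hσ
  have hΨ_eq : Ψ = fun μ ↦ lagrangian f T a (xstar μ) μ := funext fun μ ↦
    (hΨ μ).trans (ciInf_eq_of_forall_ge_of_forall_gt_exists_lt (hxstar μ) fun _ h ↦ ⟨_, h⟩)
  refine ⟨xstar, fun μ ↦ ⟨hxstar μ, fun x' hx' ↦ ?_⟩, fun μ ↦ ?_⟩
  · exact (hf.lagrangian T a μ).eq_of_forall_le hσ hx' (hxstar μ)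
  · rw [hΨ_eq]
    exact hasGradientAt_lagrangian_of_forall_le hσ hf hxstar μ

/-- Lemma 2 of the paper: for a continuously differentiable, `σ`-strongly convex cost `f`
and linear constraints given by `A, a`, (i) the Lagrangian `x ↦ f x + ⟨μ, A x - a⟩`
has a unique global minimizer `x*(μ)` for each `μ`, and (ii) the dual function
`Ψ μ = inf_x (f x + ⟨μ, A x - a⟩)` is differentiable with gradient `A x*(μ) - a`. -/
theorem stmt_5 (n m : ℕ) (σ : ℝ) (hσ : 0 < σ)
    (f : EuclideanSpace ℝ (Fin n) → ℝ) (hf : ContDiff ℝ 1 f)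
    (hsc : ConvexOn ℝ Set.univ (fun x => f x - σ / 2 * ‖x‖ ^ 2))
    (A : Matrix (Fin m) (Fin n) ℝ) (a : EuclideanSpace ℝ (Fin m))
    (Lag : EuclideanSpace ℝ (Fin n) → EuclideanSpace ℝ (Fin m) → ℝ)
    (hLag : ∀ x μ, Lag x μ = f x + @inner ℝ _ _ μ (toEuc m (A.mulVec x) - a))
    (Ψ : EuclideanSpace ℝ (Fin m) → ℝ)
    (hΨ : ∀ μ, Ψ μ = ⨅ x : EuclideanSpace ℝ (Fin n), Lag x μ) :
    ∃ xstar : EuclideanSpace ℝ (Fin m) → EuclideanSpace ℝ (Fin n),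
      (∀ μ, (∀ x, Lag (xstar μ) μ ≤ Lag x μ) ∧
            (∀ x', (∀ x, Lag x' μ ≤ Lag x μ) → x' = xstar μ)) ∧
      (∀ μ, HasGradientAt Ψ (toEuc m (A.mulVec (xstar μ)) - a) μ) :=
  stmt_5_general n m σ hσ f hsc A a Lag hLag Ψ hΨ
end

section
/- Let f : EuclideanSpace ℝ (Fin n) → ℝ be continuously differentiable and σ-strongly convex with σ > 0, let A be an m × n real matrix and a ∈ EuclideanSpace ℝ (Fin m), and for each μ let x*(μ) denote the unique global minimizer of x ↦ f(x) + ⟨μ, A.mulVec x − a⟩. Then the map μ ↦ x*(μ) is Lipschitz with constant ‖A‖/σ, and consequently the gradient of the dual function, μ ↦ A.mulVec (x*(μ)) − a, is Lipschitz with constant ‖A‖²/σ, where ‖A‖ denotes the operator norm of the linear map x ↦ A.mulVec x between Euclidean spaces. -/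
open Set Filter Topology
open scoped RealInnerProductSpace

section StrongConvexity

variable {E : Type*} [NormedAddCommGroup E] [NormedSpace ℝ E] {s : Set E} {m : ℝ} {f g : E → ℝ}

lemma StrongConvexOn.add_convexOn (hf : StrongConvexOn s m f) (hg : ConvexOn ℝ s g) :
    StrongConvexOn s m (f + g) := by
  simpa [StrongConvexOn] using hf.add hg.uniformConvexOn_zero

lemma StrongConvexOn.add_sq_norm_sub_le_of_isMinOn {x₀ x : E} (hf : StrongConvexOn s m f)
    (hmin : IsMinOn f s x₀) (hx₀ : x₀ ∈ s) (hx : x ∈ s) :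
    f x₀ + m / 2 * ‖x - x₀‖ ^ 2 ≤ f x := by
  have hseg : ∀ t ∈ Ioc (0 : ℝ) 1, (1 - t) * (m / 2 * ‖x - x₀‖ ^ 2) ≤ f x - f x₀ := by
    rintro t ⟨ht₀, ht₁⟩
    have hconv := hf.2 hx hx₀ ht₀.le (sub_nonneg.2 ht₁) (add_sub_cancel t 1)
    have hmin_t := isMinOn_iff.1 hmin _
      (hf.1 hx hx₀ ht₀.le (sub_nonneg.2 ht₁) (add_sub_cancel t 1))
    simp only [smul_eq_mul] at hconv
    have : t * ((1 - t) * (m / 2 * ‖x - x₀‖ ^ 2)) ≤ t * (f x - f x₀) := by nlinarith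
    exact le_of_mul_le_mul_left this ht₀
  have hlim : Tendsto (fun t : ℝ => (1 - t) * (m / 2 * ‖x - x₀‖ ^ 2)) (𝓝[>] 0)
      (𝓝 (m / 2 * ‖x - x₀‖ ^ 2)) := by
    have := ((continuous_const.sub continuous_id).mul continuous_const).tendsto (0 : ℝ)
      (f := fun t : ℝ => (1 - t) * (m / 2 * ‖x - x₀‖ ^ 2))
    simpa using this.mono_left nhdsWithin_le_nhds
  linarith [le_of_tendsto hlim (eventually_of_mem (Ioc_mem_nhdsGT one_pos) hseg)]

end StrongConvexity

section DualAscent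

variable {E F : Type*} [NormedAddCommGroup E] [InnerProductSpace ℝ E]
  [NormedAddCommGroup F] [InnerProductSpace ℝ F]

lemma convexOn_inner_sub (T : E →L[ℝ] F) (μ a : F) :
    ConvexOn ℝ univ fun x => ⟪μ, T x - a⟫ := by
  have h : (fun x => ⟪μ, T x - a⟫) = ⇑((innerSL ℝ μ).comp T) + fun _ => -⟪μ, a⟫ := by
    ext x
    simp [inner_sub_right, ← sub_eq_add_neg]
  rw [h]
  exact ((innerSL ℝ μ).comp T).toLinearMap.convexOn convex_univ |>.add_const _

variable {σ : ℝ} {f : E → ℝ} {T : E →L[ℝ] F} {a : F} {xstar : F → E}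

lemma StrongConvexOn.mul_sq_norm_sub_le_inner_of_isMinOn (hf : StrongConvexOn univ σ f)
    (hxstar : ∀ μ, IsMinOn (fun x => f x + ⟪μ, T x - a⟫) univ (xstar μ)) (μ₁ μ₂ : F) :
    σ * ‖xstar μ₂ - xstar μ₁‖ ^ 2 ≤ ⟪μ₁ - μ₂, T (xstar μ₂ - xstar μ₁)⟫ := by
  have growth μ x := ((hf.add_convexOn (convexOn_inner_sub T μ a)).add_sq_norm_sub_le_of_isMinOn
    (hxstar μ) (mem_univ _) (mem_univ x))
  have h₁ := growth μ₁ (xstar μ₂)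
  have h₂ := growth μ₂ (xstar μ₁)
  rw [norm_sub_rev] at h₂
  simp only [Pi.add_apply, map_sub, inner_sub_left, inner_sub_right] at h₁ h₂ ⊢
  linarith

lemma lipschitzWith_lagrangian_argmin (hσ : 0 < σ) (hf : StrongConvexOn univ σ f)
    (hxstar : ∀ μ, IsMinOn (fun x => f x + ⟪μ, T x - a⟫) univ (xstar μ)) :
    LipschitzWith (‖T‖ / σ).toNNReal xstar := by
  refine LipschitzWith.of_dist_le_mul fun μ₂ μ₁ => ?_
  rw [Real.coe_toNNReal _ (by positivity), dist_eq_norm, dist_eq_norm]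
  set d := ‖xstar μ₂ - xstar μ₁‖
  have hd : σ * d ^ 2 ≤ ‖T‖ * ‖μ₂ - μ₁‖ * d := calc
    σ * d ^ 2 ≤ ⟪μ₁ - μ₂, T (xstar μ₂ - xstar μ₁)⟫ :=
      hf.mul_sq_norm_sub_le_inner_of_isMinOn hxstar μ₁ μ₂
    _ ≤ ‖μ₁ - μ₂‖ * ‖T (xstar μ₂ - xstar μ₁)‖ := real_inner_le_norm _ _
    _ ≤ ‖μ₁ - μ₂‖ * (‖T‖ * d) := by gcongr; exact T.le_opNorm _
    _ = ‖T‖ * ‖μ₂ - μ₁‖ * d := by rw [norm_sub_rev]; ring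
  rw [div_mul_eq_mul_div, le_div_iff₀ hσ]
  rcases (norm_nonneg _ : (0 : ℝ) ≤ d).eq_or_lt with hd0 | hd0
  · rw [show d = 0 from hd0.symm, zero_mul]; positivity
  · nlinarith

lemma lipschitzWith_dual_gradient (hσ : 0 < σ) (hf : StrongConvexOn univ σ f)
    (hxstar : ∀ μ, IsMinOn (fun x => f x + ⟪μ, T x - a⟫) univ (xstar μ)) :
    LipschitzWith (‖T‖ ^ 2 / σ).toNNReal fun μ => T (xstar μ) - a := by
  refine ((T.lipschitz.comp (lipschitzWith_lagrangian_argmin hσ hf hxstar)).sub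
    (LipschitzWith.const a)).weaken (le_of_eq ?_)
  ext
  rw [Real.coe_toNNReal _ (by positivity), NNReal.coe_add, NNReal.coe_mul,
    Real.coe_toNNReal _ (by positivity)]
  simp only [coe_nnnorm, NNReal.coe_zero]
  ring

end DualAscent

theorem stmt_7_general (n m : ℕ) (σ : ℝ) (hσ : 0 < σ)
    (f : EuclideanSpace ℝ (Fin n) → ℝ)
    (hsc : ConvexOn ℝ Set.univ (fun x => f x - σ / 2 * ‖x‖ ^ 2))
    (A : Matrix (Fin m) (Fin n) ℝ) (a : EuclideanSpace ℝ (Fin m))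
    (Lag : EuclideanSpace ℝ (Fin n) → EuclideanSpace ℝ (Fin m) → ℝ)
    (hLag : ∀ x μ, Lag x μ = f x + @inner ℝ _ _ μ (toEuc m (A.mulVec x) - a))
    (xstar : EuclideanSpace ℝ (Fin m) → EuclideanSpace ℝ (Fin n))
    (hxstar : ∀ μ, ∀ x, Lag (xstar μ) μ ≤ Lag x μ)
    (nA : ℝ) (hnA : nA = ‖LinearMap.toContinuousLinearMap (Matrix.toEuclideanLin A)‖) :
    LipschitzWith (Real.toNNReal (nA / σ)) xstar ∧
    LipschitzWith (Real.toNNReal (nA ^ 2 / σ))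
      (fun μ => toEuc m (A.mulVec (xstar μ)) - a) := by
  set T := LinearMap.toContinuousLinearMap (Matrix.toEuclideanLin A)
  have hf : StrongConvexOn univ σ f := strongConvexOn_iff_convex.2 hsc
  have hmin : ∀ μ, IsMinOn (fun x => f x + ⟪μ, T x - a⟫) univ (xstar μ) := fun μ =>
    isMinOn_univ_iff.2 fun x => by have h := hxstar μ x; rwa [hLag, hLag] at h
  subst hnA
  exact ⟨lipschitzWith_lagrangian_argmin hσ hf hmin, lipschitzWith_dual_gradient hσ hf hmin⟩

/-- For a continuously differentiable, `σ`-strongly convex cost `f` with linear constraints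
`A, a`, the Lagrangian minimizer map `μ ↦ x*(μ)` is Lipschitz with constant `‖A‖ / σ`, and
hence the dual gradient `μ ↦ A x*(μ) - a` is Lipschitz with constant `‖A‖² / σ`, where
`‖A‖` is the operator norm of `x ↦ A.mulVec x` between Euclidean spaces. -/
theorem stmt_7 (n m : ℕ) (σ : ℝ) (hσ : 0 < σ)
    (f : EuclideanSpace ℝ (Fin n) → ℝ) (hf : ContDiff ℝ 1 f)
    (hsc : ConvexOn ℝ Set.univ (fun x => f x - σ / 2 * ‖x‖ ^ 2))
    (A : Matrix (Fin m) (Fin n) ℝ) (a : EuclideanSpace ℝ (Fin m))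
    (Lag : EuclideanSpace ℝ (Fin n) → EuclideanSpace ℝ (Fin m) → ℝ)
    (hLag : ∀ x μ, Lag x μ = f x + @inner ℝ _ _ μ (toEuc m (A.mulVec x) - a))
    (xstar : EuclideanSpace ℝ (Fin m) → EuclideanSpace ℝ (Fin n))
    (hxstar : ∀ μ, ∀ x, Lag (xstar μ) μ ≤ Lag x μ)
    (nA : ℝ) (hnA : nA = ‖LinearMap.toContinuousLinearMap (Matrix.toEuclideanLin A)‖) :
    LipschitzWith (Real.toNNReal (nA / σ)) xstar ∧
    LipschitzWith (Real.toNNReal (nA ^ 2 / σ))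
      (fun μ => toEuc m (A.mulVec (xstar μ)) - a) :=
  stmt_7_general n m σ hσ f hsc A a Lag hLag xstar hxstar nA hnA
end
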